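/- arXiv:math/0407057 — 2 statements merged into one kernel-verified Lean document; each statement's English description precedes it below -/
import Mathlib

section
/- For each n ∈ ℝ₊^I with n ≠ 0, the optimization problem of maximizing G_n(Λ⁺) over the feasible set for n has a unique optimal solution Λ⁺(n) = (Λ_i(n) : i ∈ I₊(n)); moreover every component of Λ⁺(n) is strictly positive and is bounded above by C* = max_j C_j. -/
/-!
On `I₊(n)` the objective is `∑ κᵢ nᵢ^α U(Λᵢ)` with `U x = log x` or `x^(1-α)/(1-α)`. Since
`U' x = x^(-α)`, `U` is strictly increasing and strictly concave on `(0, ∞)`. The feasible set is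
a compact convex polytope containing a point `e` that is positive on `I₊(n)`.

For `α < 1`, `U` is continuous on `[0, ∞)`, so a maximizer exists; it cannot vanish at some
`i ∈ I₊(n)`, because moving a distance `t` towards `e` gains of order `t^(1-α)` in coordinate `i`
and loses only `O(t)` elsewhere. For `α ≥ 1`, `U → -∞` at `0`, so the maximum is attained on the
compact set where every coordinate in `I₊(n)` is at least some `ε > 0`, and every maximizer is
positive because the objective is `-∞` otherwise. Uniqueness then follows from strict concavity
on the positive part of the feasible set, and `Λᵢ ≤ C*` from any resource used by route `i`.
-/

open Real Set

noncomputable section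

/-- Feasible set for the bandwidth allocation problem at state `n`: the vector
`Λ⁺ = (Λ_i : i ∈ I₊(n))` is embedded in `ℝ^I` by requiring `L i = 0` whenever `n i = 0`. -/
def Feasible {I J : ℕ} (A : Fin J → Fin I → ℝ) (C : Fin J → ℝ)
    (n : Fin I → ℝ) : Set (Fin I → ℝ) :=
  {L | (∀ i, 0 ≤ L i) ∧ (∀ i, n i = 0 → L i = 0) ∧ ∀ j, ∑ i, A j i * L i ≤ C j}

/-- The objective `G_n(Λ⁺)`, taking the value `⊥ = -∞` when `α ≥ 1` and some
coordinate of `Λ⁺` in `I₊(n)` vanishes. -/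
def Gfun {I : ℕ} (α : ℝ) (κ : Fin I → ℝ) (n L : Fin I → ℝ) : EReal :=
  if 1 ≤ α ∧ ∃ i, 0 < n i ∧ L i = 0 then ⊥
  else if α = 1 then
    ((∑ i, if 0 < n i then κ i * n i * Real.log (L i) else 0 : ℝ) : EReal)
  else
    ((∑ i, if 0 < n i then κ i * n i ^ α * L i ^ (1 - α) / (1 - α) else 0 : ℝ) : EReal)

/-- `L` is an optimal weighted α-fair bandwidth allocation for the state `n`,
i.e. a maximizer of `G_n` over the feasible set for `n` (with `L i = 0` for `i ∈ I₀(n)`). -/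
def IsAlloc {I J : ℕ} (A : Fin J → Fin I → ℝ) (C : Fin J → ℝ) (α : ℝ)
    (κ : Fin I → ℝ) (n L : Fin I → ℝ) : Prop :=
  L ∈ Feasible A C n ∧ ∀ L' ∈ Feasible A C n, Gfun α κ n L' ≤ Gfun α κ n L

/-- `f` is absolutely continuous on `[0, T]` for every `T > 0` (ε-δ definition with
finitely many pairwise disjoint subintervals). -/
def AbsContNonneg (f : ℝ → ℝ) : Prop :=
  ∀ T > (0:ℝ), ∀ ε > (0:ℝ), ∃ δ > (0:ℝ), ∀ (m : ℕ) (a b : Fin m → ℝ),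
    (∀ k, 0 ≤ a k ∧ a k ≤ b k ∧ b k ≤ T) →
    (∀ k l, k < l → b k ≤ a l ∨ b l ≤ a k) →
    (∑ k, (b k - a k)) < δ → (∑ k, |f (b k) - f (a k)|) < ε

/-- Fluid model solution: `n : [0,∞) → ℝ₊^I` absolutely continuous, and at every
regular point `t` the derivative conditions (13) and capacity condition (14) hold. -/
def IsFluidSol {I J : ℕ} (A : Fin J → Fin I → ℝ) (C : Fin J → ℝ)
    (ν μ : Fin I → ℝ) (Λ : (Fin I → ℝ) → Fin I → ℝ)
    (n : ℝ → Fin I → ℝ) : Prop :=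
  (∀ i, AbsContNonneg fun t => n t i) ∧
  (∀ t ∈ Ici (0:ℝ), ∀ i, 0 ≤ n t i) ∧
  ∀ t ∈ Ici (0:ℝ),
    (∀ i, DifferentiableWithinAt ℝ (fun s => n s i) (Ici 0) t) →
    (∀ i, (0 < n t i →
        HasDerivWithinAt (fun s => n s i) (ν i - μ i * Λ (n t) i) (Ici 0) t) ∧
      (n t i = 0 → HasDerivWithinAt (fun s => n s i) 0 (Ici 0) t)) ∧
    ∀ j, (∑ i, A j i * (if 0 < n t i then Λ (n t) i else ν i / μ i)) ≤ C j

/-- The set `J*` of critically loaded resources. -/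
def Jstar {I J : ℕ} (A : Fin J → Fin I → ℝ) (C : Fin J → ℝ)
    (ν μ : Fin I → ℝ) : Set (Fin J) :=
  {j | ∑ i, A j i * (ν i / μ i) = C j}

/-- The workload map `w(n)`. -/
def wl {I J : ℕ} (A : Fin J → Fin I → ℝ) (μ : Fin I → ℝ)
    (n : Fin I → ℝ) : Fin J → ℝ :=
  fun j => ∑ i, A j i * n i / μ i

/-- Feasible set of the workload optimization problem (22) for workload `w`. -/
def WFeasible {I J : ℕ} (A : Fin J → Fin I → ℝ) (C : Fin J → ℝ)
    (ν μ : Fin I → ℝ) (w : Fin J → ℝ) : Set (Fin I → ℝ) :=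
  {m | (∀ i, 0 ≤ m i) ∧ ∀ j ∈ Jstar A C ν μ, w j ≤ ∑ i, A j i * m i / μ i}

/-- The Lyapunov function `F`. -/
def Ffun {I : ℕ} (α : ℝ) (κ ν μ : Fin I → ℝ) (n : Fin I → ℝ) : ℝ :=
  (1 / (α + 1)) * ∑ i, ν i * κ i * μ i ^ (α - 1) * (n i / ν i) ^ (α + 1)

/-- The function `K` (the derivative of `F` along fluid model solutions). -/
def Kfun {I : ℕ} (α : ℝ) (κ ν μ : Fin I → ℝ)
    (Λ : (Fin I → ℝ) → Fin I → ℝ) (n : Fin I → ℝ) : ℝ :=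
  ∑ i, if 0 < n i then κ i * (μ i * n i / ν i) ^ α * (ν i / μ i - Λ n i) else 0


open Filter Topology

def fairUtility (α x : ℝ) : ℝ :=
  if α = 1 then log x else x ^ (1 - α) / (1 - α)

section fairUtility

variable {α : ℝ}

lemma fairUtility_one : fairUtility 1 = log := by
  ext x; simp [fairUtility]

lemma fairUtility_of_ne_one (hα : α ≠ 1) : fairUtility α = fun x => x ^ (1 - α) / (1 - α) := by
  ext x; simp [fairUtility, hα]

lemma hasDerivAt_fairUtility {x : ℝ} (hx : 0 < x) :
    HasDerivAt (fairUtility α) (x ^ (-α)) x := by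
  by_cases hα : α = 1
  · subst hα
    simpa [fairUtility_one, rpow_neg_one] using hasDerivAt_log hx.ne'
  · rw [fairUtility_of_ne_one hα]
    refine ((hasDerivAt_rpow_const (Or.inl hx.ne')).div_const (1 - α)).congr_deriv ?_
    rw [mul_div_cancel_left₀ _ (sub_ne_zero.2 (Ne.symm hα)), sub_sub_cancel_left]

lemma continuousOn_fairUtility : ContinuousOn (fairUtility α) (Ioi 0) :=
  fun _ hx => (hasDerivAt_fairUtility hx).continuousAt.continuousWithinAt

lemma continuousOn_fairUtility_Ici (hα : α < 1) : ContinuousOn (fairUtility α) (Ici 0) := by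
  rw [fairUtility_of_ne_one hα.ne]
  exact ((continuous_rpow_const (by linarith)).div_const _).continuousOn

lemma strictMonoOn_fairUtility : StrictMonoOn (fairUtility α) (Ioi 0) :=
  strictMonoOn_of_deriv_pos (convex_Ioi 0) continuousOn_fairUtility fun x hx => by
    rw [interior_Ioi] at hx
    rw [(hasDerivAt_fairUtility hx).deriv]
    exact rpow_pos_of_pos hx _

lemma strictAntiOn_deriv_fairUtility (hα : 0 < α) :
    StrictAntiOn (deriv (fairUtility α)) (Ioi 0) := fun x hx y hy hxy => by
  rw [(hasDerivAt_fairUtility hx).deriv, (hasDerivAt_fairUtility hy).deriv]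
  exact rpow_lt_rpow_of_neg hx hxy (neg_lt_zero.2 hα)

lemma strictConcaveOn_fairUtility (hα : 0 < α) : StrictConcaveOn ℝ (Ioi 0) (fairUtility α) :=
  StrictAntiOn.strictConcaveOn_of_deriv (convex_Ioi 0) continuousOn_fairUtility
    (by simpa using strictAntiOn_deriv_fairUtility hα)

lemma strictConcaveOn_fairUtility_Ici (hα₀ : 0 < α) (hα₁ : α < 1) :
    StrictConcaveOn ℝ (Ici 0) (fairUtility α) :=
  StrictAntiOn.strictConcaveOn_of_deriv (convex_Ici 0) (continuousOn_fairUtility_Ici hα₁)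
    (by simpa using strictAntiOn_deriv_fairUtility hα₀)

lemma fairUtility_zero (hα : α ≠ 1) : fairUtility α 0 = 0 := by
  simp [fairUtility_of_ne_one hα, zero_rpow (sub_ne_zero.2 (Ne.symm hα))]

lemma fairUtility_mul (hα : α ≠ 1) {t x : ℝ} (ht : 0 ≤ t) (hx : 0 ≤ x) :
    fairUtility α (t * x) = t ^ (1 - α) * fairUtility α x := by
  simp only [fairUtility_of_ne_one hα, mul_rpow ht hx, mul_div_assoc]

lemma fairUtility_pos (hα : α < 1) {x : ℝ} (hx : 0 < x) : 0 < fairUtility α x := by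
  rw [fairUtility_of_ne_one hα.ne]
  exact div_pos (rpow_pos_of_pos hx _) (by linarith)

lemma tendsto_fairUtility_atBot (hα : 1 ≤ α) : Tendsto (fairUtility α) (𝓝[>] 0) atBot := by
  rcases hα.eq_or_lt with rfl | hα
  · simpa [fairUtility_one] using tendsto_log_nhdsGT_zero
  · have hα' : 1 - α < 0 := by linarith
    rw [fairUtility_of_ne_one hα.ne']
    exact (tendsto_rpow_neg_nhdsGT_zero hα').atTop_div_const_of_neg hα'

end fairUtility

lemma exists_mul_lt_rpow_mul {α : ℝ} (hα : 0 < α) (M : ℝ) {c : ℝ} (hc : 0 < c) :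
    ∃ t ∈ Ioc (0 : ℝ) 1, t * M < t ^ (1 - α) * c := by
  have hlim : Tendsto (fun t : ℝ => t ^ α * M) (𝓝[>] 0) (𝓝 0) := by
    simpa [zero_rpow hα.ne'] using
      ((continuousAt_rpow_const 0 α (Or.inr hα.le)).tendsto.mono_left nhdsWithin_le_nhds).mul_const M
  have hunit : ∀ᶠ t in 𝓝[>] (0 : ℝ), t ∈ Ioc (0 : ℝ) 1 := Ioc_mem_nhdsGT one_pos
  obtain ⟨t, ht, hlt⟩ := (hunit.and (hlim.eventually_lt_const hc)).exists
  refine ⟨t, ht, ?_⟩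
  calc t * M = t ^ (1 - α) * (t ^ α * M) := by
        rw [← mul_assoc, ← rpow_add ht.1, sub_add_cancel, rpow_one]
    _ < t ^ (1 - α) * c := mul_lt_mul_of_pos_left hlt (rpow_pos_of_pos ht.1 _)

section Feasible

variable {I J : ℕ} {A : Fin J → Fin I → ℝ} {C : Fin J → ℝ} {n : Fin I → ℝ}

lemma convex_feasible : Convex ℝ (Feasible A C n) := by
  rintro x ⟨hx₀, hxn, hxC⟩ y ⟨hy₀, hyn, hyC⟩ a b ha hb hab
  refine ⟨fun i => ?_, fun i hi => ?_, fun j => ?_⟩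
  · simp only [Pi.add_apply, Pi.smul_apply, smul_eq_mul]
    exact add_nonneg (mul_nonneg ha (hx₀ i)) (mul_nonneg hb (hy₀ i))
  · simp [hxn i hi, hyn i hi]
  · calc ∑ i, A j i * (a • x + b • y) i
          = a * ∑ i, A j i * x i + b * ∑ i, A j i * y i := by
            simp only [Pi.add_apply, Pi.smul_apply, smul_eq_mul, Finset.mul_sum,
              ← Finset.sum_add_distrib]
            exact Finset.sum_congr rfl fun i _ => by ring
      _ ≤ a * C j + b * C j := by gcongr; exacts [hxC j, hyC j]
      _ = C j := by rw [← add_mul, hab, one_mul]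

lemma le_iSup_of_mem_feasible (hA : ∀ j i, 0 ≤ A j i) (hAcol : ∀ i, ∃ j, A j i = 1)
    {L : Fin I → ℝ} (hL : L ∈ Feasible A C n) (i : Fin I) : L i ≤ ⨆ j, C j := by
  obtain ⟨j, hj⟩ := hAcol i
  calc L i = A j i * L i := by rw [hj, one_mul]
    _ ≤ ∑ i', A j i' * L i' :=
        Finset.single_le_sum (fun i' _ => mul_nonneg (hA j i') (hL.1 i')) (Finset.mem_univ i)
    _ ≤ C j := hL.2.2 j
    _ ≤ ⨆ j, C j := le_ciSup (finite_range C).bddAbove j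

lemma isCompact_feasible (hA : ∀ j i, 0 ≤ A j i) (hAcol : ∀ i, ∃ j, A j i = 1) :
    IsCompact (Feasible A C n) := by
  refine isCompact_Icc.of_isClosed_subset ?_
    fun L hL => ⟨hL.1, fun i => le_iSup_of_mem_feasible hA hAcol hL i⟩
  simp only [Feasible, ofPred_and, ofPred_forall]
  refine (isClosed_iInter fun i => isClosed_le continuous_const (continuous_apply i)).inter
    ((isClosed_iInter fun i => isClosed_iInter fun _ => isClosed_eq (continuous_apply i)
      continuous_const).inter (isClosed_iInter fun j => isClosed_le ?_ continuous_const))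
  exact continuous_finsetSum _ fun i _ => continuous_const.mul (continuous_apply i)

lemma exists_mem_feasible_pos (hA : ∀ j i, 0 ≤ A j i) (hC : ∀ j, 0 < C j) (n : Fin I → ℝ) :
    ∃ e ∈ Feasible A C n, ∀ i, 0 < n i → 0 < e i := by
  have hsmall : ∀ j, ∀ᶠ ε in 𝓝 (0 : ℝ), ε * ∑ i, A j i < C j := fun j =>
    ((continuous_mul_const _).tendsto' 0 0 (zero_mul _)).eventually_lt_const (hC j)
  have hpos : ∀ᶠ ε in 𝓝[>] (0 : ℝ), 0 < ε := self_mem_nhdsWithin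
  obtain ⟨ε, hε, hεC⟩ :=
    (hpos.and ((eventually_all.2 hsmall).filter_mono nhdsWithin_le_nhds)).exists
  refine ⟨fun i => if n i = 0 then 0 else ε, ⟨fun i => ?_, fun i hi => if_pos hi, fun j => ?_⟩,
    fun i hi => by simpa [hi.ne'] using hε⟩
  · dsimp only
    split_ifs <;> simp [le_of_lt hε]
  · calc ∑ i, A j i * (if n i = 0 then 0 else ε) ≤ ∑ i, A j i * ε := by
          gcongr with i
          · exact hA j i
          · split_ifs <;> simp [le_of_lt hε]
      _ = ε * ∑ i, A j i := by rw [Finset.mul_sum]; simp [mul_comm]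
      _ ≤ C j := (hεC j).le

end Feasible

lemma strictConcaveOn_sum_ite_mul {ι : Type*} [Fintype ι] (p : ι → Prop) [DecidablePred p]
    {K : Set ℝ} {φ : ℝ → ℝ} (hφ : StrictConcaveOn ℝ K φ) {w : ι → ℝ} (hw : ∀ i, p i → 0 < w i) :
    StrictConcaveOn ℝ {x : ι → ℝ | ∀ i, (p i → x i ∈ K) ∧ (¬ p i → x i = 0)}
      (fun x => ∑ i, if p i then w i * φ (x i) else 0) := by
  refine ⟨fun x hx y hy a b ha hb hab i => ⟨fun hi => ?_, fun hi => ?_⟩, ?_⟩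
  · exact hφ.1 ((hx i).1 hi) ((hy i).1 hi) ha hb hab
  · simp [(hx i).2 hi, (hy i).2 hi]
  intro x hx y hy hxy a b ha hb hab
  obtain ⟨k, hk⟩ := Function.ne_iff.1 hxy
  have hpk : p k := by_contra fun h => hk (((hx k).2 h).trans ((hy k).2 h).symm)
  simp only [smul_eq_mul, Finset.mul_sum, ← Finset.sum_add_distrib]
  refine Finset.sum_lt_sum (fun i _ => ?_) ⟨k, Finset.mem_univ k, ?_⟩
  · by_cases hi : p i
    · simp only [hi, if_true, Pi.add_apply, Pi.smul_apply, smul_eq_mul]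
      have := mul_le_mul_of_nonneg_left
        (hφ.concaveOn.2 ((hx i).1 hi) ((hy i).1 hi) ha.le hb.le hab) (hw i hi).le
      simp only [smul_eq_mul] at this
      linarith
    · simp [hi]
  · simp only [hpk, if_true, Pi.add_apply, Pi.smul_apply, smul_eq_mul]
    have := mul_lt_mul_of_pos_left (hφ.2 ((hx k).1 hpk) ((hy k).1 hpk) hk ha hb hab) (hw k hpk)
    simp only [smul_eq_mul] at this
    linarith

def fairObjective {I : ℕ} (α : ℝ) (κ n L : Fin I → ℝ) : ℝ :=
  ∑ i, if 0 < n i then κ i * n i ^ α * fairUtility α (L i) else 0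

section fairObjective

variable {I : ℕ} {α : ℝ} {κ n : Fin I → ℝ}

lemma Gfun_eq_bot (hα : 1 ≤ α) {L : Fin I → ℝ} (hL : ∃ i, 0 < n i ∧ L i = 0) :
    Gfun α κ n L = ⊥ :=
  if_pos ⟨hα, hL⟩

lemma Gfun_eq_fairObjective {L : Fin I → ℝ} (hL : α < 1 ∨ ∀ i, 0 < n i → L i ≠ 0) :
    Gfun α κ n L = fairObjective α κ n L := by
  rw [Gfun, if_neg fun ⟨hα, i, hi, hLi⟩ => hL.elim (fun h => by linarith) fun h => h i hi hLi]
  by_cases hα : α = 1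
  · subst hα
    simp [fairObjective, fairUtility_one]
  · simp [fairObjective, fairUtility_of_ne_one hα, hα, mul_div_assoc]

lemma continuousOn_fairObjective {K : Set ℝ} (hK : ContinuousOn (fairUtility α) K) :
    ContinuousOn (fairObjective α κ n) {L | ∀ i, 0 < n i → L i ∈ K} := by
  refine continuousOn_finsetSum _ fun i _ => ?_
  by_cases hi : 0 < n i
  · simp only [hi, if_true]
    exact continuousOn_const.mul
      (hK.comp (continuous_apply i).continuousOn fun L hL => hL i hi)
  · simp only [hi, if_false]
    exact continuousOn_const

lemma strictConcaveOn_fairObjective (hα : 0 < α) (hκ : ∀ i, 0 < κ i) :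
    StrictConcaveOn ℝ {L : Fin I → ℝ | ∀ i, (0 < n i → L i ∈ Ioi 0) ∧ (¬ 0 < n i → L i = 0)}
      (fairObjective α κ n) :=
  strictConcaveOn_sum_ite_mul _ (strictConcaveOn_fairUtility hα)
    fun i hi => mul_pos (hκ i) (rpow_pos_of_pos hi α)

lemma exists_fairObjective_lt_segment (hα₀ : 0 < α) (hα₁ : α < 1) (hκ : ∀ i, 0 < κ i)
    {X Y : Fin I → ℝ} (hX : ∀ i, 0 ≤ X i) (hY : ∀ i, 0 ≤ Y i) {k : Fin I} (hk : 0 < n k)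
    (hXk : X k = 0) (hYk : 0 < Y k) :
    ∃ t ∈ Ioc (0 : ℝ) 1, fairObjective α κ n X < fairObjective α κ n ((1 - t) • X + t • Y) := by
  set g := fairObjective α κ n
  set φ : Fin I → ℝ → ℝ := fun i x => if 0 < n i then κ i * n i ^ α * fairUtility α x else 0
  set c := κ k * n k ^ α * fairUtility α (Y k)
  have hc : 0 < c := mul_pos (mul_pos (hκ k) (rpow_pos_of_pos hk α)) (fairUtility_pos hα₁ hYk)
  obtain ⟨t, ht, hlt⟩ := exists_mul_lt_rpow_mul hα₀ (c - (g Y - g X)) hc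
  refine ⟨t, ht, ?_⟩
  set Z := (1 - t) • X + t • Y
  set gap : Fin I → ℝ := fun i => φ i (Z i) - ((1 - t) * φ i (X i) + t * φ i (Y i))
  have hgap : ∀ i, 0 ≤ gap i := by
    intro i
    by_cases hi : 0 < n i
    · simp only [gap, φ, hi, if_true, Z, Pi.add_apply, Pi.smul_apply, smul_eq_mul]
      have := mul_le_mul_of_nonneg_left
        ((strictConcaveOn_fairUtility_Ici hα₀ hα₁).concaveOn.2 (hX i) (hY i)
          (sub_nonneg.2 ht.2) ht.1.le (sub_add_cancel 1 t)) (mul_pos (hκ i) (rpow_pos_of_pos hi α)).le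
      simp only [smul_eq_mul] at this
      linarith
    · simp [gap, φ, hi]
  -- the zero coordinate `k` gains `t ^ (1 - α)`, not just `t`
  have hgap_k : gap k = (t ^ (1 - α) - t) * c := by
    simp only [gap, φ, hk, if_true, Z, Pi.add_apply, Pi.smul_apply, smul_eq_mul, hXk, mul_zero,
      zero_add, fairUtility_zero hα₁.ne, fairUtility_mul hα₁.ne ht.1.le (hY k), c]
    ring
  have hsum : g Z - ((1 - t) * g X + t * g Y) = ∑ i, gap i := by
    simp only [g, fairObjective, gap, φ, Finset.sum_sub_distrib, Finset.sum_add_distrib,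
      Finset.mul_sum]
  have := Finset.single_le_sum (fun i _ => hgap i) (Finset.mem_univ k)
  linarith

lemma exists_fairObjective_lt_of_apply_lt (hα : 1 ≤ α) (hκ : ∀ i, 0 < κ i) (b V : ℝ) :
    ∃ ε > 0, ∀ L : Fin I → ℝ, (∀ i, 0 < n i → L i ∈ Ioc 0 b) →
      ∀ k, 0 < n k → L k < ε → fairObjective α κ n L < V := by
  set B := fairObjective α κ n fun _ => b
  have hev : ∀ᶠ x in 𝓝[>] (0 : ℝ), ∀ k, 0 < n k →
      κ k * n k ^ α * (fairUtility α x - fairUtility α b) < V - B := by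
    refine eventually_all.2 fun k => ?_
    by_cases hk : 0 < n k
    · refine (((tendsto_atBot_add_const_right _ (-fairUtility α b)
        (tendsto_fairUtility_atBot hα)).const_mul_atBot
          (mul_pos (hκ k) (rpow_pos_of_pos hk α))).eventually_lt_atBot (V - B)).mono
        fun x hx _ => ?_
      simpa [sub_eq_add_neg] using hx
    · exact Eventually.of_forall fun _ h => absurd h hk
  obtain ⟨ε, hε, hεsub⟩ := mem_nhdsGT_iff_exists_Ioo_subset.1 hev
  refine ⟨ε, hε, fun L hL k hk hLk => ?_⟩
  have hterm : ∀ i, (if 0 < n i then κ i * n i ^ α * fairUtility α (L i) else 0)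
      - (if 0 < n i then κ i * n i ^ α * fairUtility α b else 0) ≤ 0 := by
    intro i
    by_cases hi : 0 < n i
    · obtain ⟨hLi, hLib⟩ := hL i hi
      simp only [hi, if_true, ← mul_sub]
      exact mul_nonpos_of_nonneg_of_nonpos (mul_pos (hκ i) (rpow_pos_of_pos hi α)).le
        (sub_nonpos.2 (strictMonoOn_fairUtility.monotoneOn hLi (hLi.trans_le hLib) hLib))
    · simp [hi]
  have hle : fairObjective α κ n L - B ≤ κ k * n k ^ α * (fairUtility α (L k) - fairUtility α b) := by
    simp only [B, fairObjective]
    rw [← Finset.sum_sub_distrib, ← Finset.add_sum_erase _ _ (Finset.mem_univ k)]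
    simp only [hk, if_true, ← mul_sub]
    linarith [Finset.sum_nonpos fun i (_ : i ∈ Finset.univ.erase k) => hterm i]
  linarith [hεsub ⟨(hL k hk).1, hLk⟩ k hk]

end fairObjective

section IsAlloc

variable {I J : ℕ} {A : Fin J → Fin I → ℝ} {C : Fin J → ℝ} {α : ℝ} {κ n : Fin I → ℝ}

lemma exists_isAlloc_of_lt_one (hα : α < 1) (hF : IsCompact (Feasible A C n))
    (hne : (Feasible A C n).Nonempty) : ∃ L, IsAlloc A C α κ n L := by
  obtain ⟨L, hL, hmax⟩ := hF.exists_isMaxOn hne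
    ((continuousOn_fairObjective (continuousOn_fairUtility_Ici hα)).mono fun X hX i _ => hX.1 i)
  refine ⟨L, hL, fun X hX => ?_⟩
  rw [Gfun_eq_fairObjective (.inl hα), Gfun_eq_fairObjective (.inl hα)]
  exact EReal.coe_le_coe_iff.2 (hmax hX)

lemma exists_isAlloc_of_one_le (hα : 1 ≤ α) (hκ : ∀ i, 0 < κ i) {b : ℝ}
    (hF : IsCompact (Feasible A C n)) (hb : ∀ L ∈ Feasible A C n, ∀ i, L i ≤ b)
    {e : Fin I → ℝ} (he : e ∈ Feasible A C n) (hepos : ∀ i, 0 < n i → 0 < e i) :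
    ∃ L, IsAlloc A C α κ n L := by
  have hIoc : ∀ L ∈ Feasible A C n, (∀ i, 0 < n i → 0 < L i) → ∀ i, 0 < n i → L i ∈ Ioc 0 b :=
    fun L hL hpos i hi => ⟨hpos i hi, hb L hL i⟩
  obtain ⟨ε, hε, hsmall⟩ := exists_fairObjective_lt_of_apply_lt hα hκ b (fairObjective α κ n e)
  set Fε := Feasible A C n ∩ {L | ∀ i, 0 < n i → ε ≤ L i}
  have hFε : IsCompact Fε := hF.inter_right <| by
    simp only [ofPred_forall]
    exact isClosed_iInter fun i => isClosed_iInter fun _ =>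
      isClosed_le continuous_const (continuous_apply i)
  -- `e` cannot have a coordinate below `ε`, since `hsmall` would give `G e < G e`
  have heε : e ∈ Fε :=
    ⟨he, fun i hi => not_lt.1 fun hlt => lt_irrefl _ (hsmall e (hIoc e he hepos) i hi hlt)⟩
  obtain ⟨L, hL, hmax⟩ := hFε.exists_isMaxOn ⟨e, heε⟩
    ((continuousOn_fairObjective continuousOn_fairUtility).mono
      fun X hX i hi => hε.trans_le (hX.2 i hi))
  refine ⟨L, hL.1, fun X hX => ?_⟩
  rw [Gfun_eq_fairObjective (.inr fun i hi => (hε.trans_le (hL.2 i hi)).ne')]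
  by_cases hz : ∃ i, 0 < n i ∧ X i = 0
  · rw [Gfun_eq_bot hα hz]
    exact bot_le
  push Not at hz
  rw [Gfun_eq_fairObjective (.inr hz), EReal.coe_le_coe_iff]
  by_cases hXε : ∀ i, 0 < n i → ε ≤ X i
  · exact hmax ⟨hX, hXε⟩
  push Not at hXε
  obtain ⟨k, hk, hXk⟩ := hXε
  exact (hsmall X (hIoc X hX fun i hi => (hX.1 i).lt_of_ne' (hz i hi)) k hk hXk).le.trans
    (hmax heε)

lemma IsAlloc.pos (hα : 0 < α) (hκ : ∀ i, 0 < κ i) {L e : Fin I → ℝ}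
    (hL : IsAlloc A C α κ n L) (he : e ∈ Feasible A C n) (hepos : ∀ i, 0 < n i → 0 < e i)
    {i : Fin I} (hi : 0 < n i) : 0 < L i := by
  refine (hL.1.1 i).lt_of_ne' fun hLi => ?_
  rcases le_or_gt 1 α with h1 | h1
  · have := hL.2 e he
    rw [Gfun_eq_bot h1 ⟨i, hi, hLi⟩, le_bot_iff,
      Gfun_eq_fairObjective (.inr fun j hj => (hepos j hj).ne')] at this
    exact EReal.coe_ne_bot _ this
  · obtain ⟨t, ht, hlt⟩ :=
      exists_fairObjective_lt_segment hα h1 hκ hL.1.1 he.1 hi hLi (hepos i hi)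
    have := hL.2 _ (convex_feasible hL.1 he (sub_nonneg.2 ht.2) ht.1.le (sub_add_cancel 1 t))
    rw [Gfun_eq_fairObjective (.inl h1), Gfun_eq_fairObjective (.inl h1),
      EReal.coe_le_coe_iff] at this
    exact this.not_gt hlt

lemma IsAlloc.eq (hα : 0 < α) (hκ : ∀ i, 0 < κ i) (hn : ∀ i, 0 ≤ n i) {L L' : Fin I → ℝ}
    (hL : IsAlloc A C α κ n L) (hL' : IsAlloc A C α κ n L')
    (hLpos : ∀ i, 0 < n i → 0 < L i) (hL'pos : ∀ i, 0 < n i → 0 < L' i) : L = L' := by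
  have hconc := strictConcaveOn_fairObjective (n := n) hα hκ
  set D := Feasible A C n ∩ {X | ∀ i, (0 < n i → X i ∈ Ioi 0) ∧ (¬ 0 < n i → X i = 0)}
  have hmem : ∀ X ∈ Feasible A C n, (∀ i, 0 < n i → 0 < X i) → X ∈ D := fun X hX hpos =>
    ⟨hX, fun i => ⟨hpos i, fun hi => hX.2.1 i ((hn i).eq_of_not_lt hi).symm⟩⟩
  have hmax : ∀ X, IsAlloc A C α κ n X → (∀ i, 0 < n i → 0 < X i) →
      IsMaxOn (fairObjective α κ n) D X := fun X hX hpos Y hY => by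
    have := hX.2 Y hY.1
    rwa [Gfun_eq_fairObjective (.inr fun i hi => ((hY.2 i).1 hi).ne'),
      Gfun_eq_fairObjective (.inr fun i hi => (hpos i hi).ne'), EReal.coe_le_coe_iff] at this
  exact (hconc.subset inter_subset_right (convex_feasible.inter hconc.1)).eq_of_isMaxOn
    (hmax L hL hLpos) (hmax L' hL' hL'pos) (hmem L hL.1 hLpos) (hmem L' hL'.1 hL'pos)

end IsAlloc

theorem stmt0_general {I J : ℕ}
    (A : Fin J → Fin I → ℝ) (hA01 : ∀ j i, A j i = 0 ∨ A j i = 1)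
    (hAcol : ∀ i, ∃ j, A j i = 1)
    (C : Fin J → ℝ) (hC : ∀ j, 0 < C j)
    (α : ℝ) (hα : 0 < α) (κ : Fin I → ℝ) (hκ : ∀ i, 0 < κ i)
    (n : Fin I → ℝ) (hn : ∀ i, 0 ≤ n i) :
    ∃ L : Fin I → ℝ, IsAlloc A C α κ n L ∧
      (∀ i, 0 < n i → 0 < L i ∧ L i ≤ ⨆ j, C j) ∧
      ∀ L' : Fin I → ℝ, IsAlloc A C α κ n L' → L' = L := by
  have hA : ∀ j i, 0 ≤ A j i := fun j i => (hA01 j i).elim (·.ge) fun h => h ▸ zero_le_one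
  have hbound := fun L (hL : L ∈ Feasible A C n) => le_iSup_of_mem_feasible hA hAcol hL
  have hF : IsCompact (Feasible A C n) := isCompact_feasible hA hAcol
  obtain ⟨e, he, hepos⟩ := exists_mem_feasible_pos hA hC n
  obtain ⟨L, hL⟩ : ∃ L, IsAlloc A C α κ n L := by
    rcases lt_or_ge α 1 with h1 | h1
    · exact exists_isAlloc_of_lt_one h1 hF ⟨e, he⟩
    · exact exists_isAlloc_of_one_le h1 hκ hF hbound he hepos
  have hpos : ∀ L, IsAlloc A C α κ n L → ∀ i, 0 < n i → 0 < L i :=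
    fun L hL i hi => hL.pos hα hκ he hepos hi
  exact ⟨L, hL, fun i hi => ⟨hpos L hL i hi, hbound L hL.1 i⟩,
    fun L' hL' => hL'.eq hα hκ hn hL (hpos L' hL') (hpos L hL)⟩

theorem stmt0 {I J : ℕ} (hI : 0 < I) (hJ : 0 < J)
    (A : Fin J → Fin I → ℝ) (hA01 : ∀ j i, A j i = 0 ∨ A j i = 1)
    (hAcol : ∀ i, ∃ j, A j i = 1) (hArank : LinearIndependent ℝ A)
    (C : Fin J → ℝ) (hC : ∀ j, 0 < C j)
    (α : ℝ) (hα : 0 < α) (κ : Fin I → ℝ) (hκ : ∀ i, 0 < κ i)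
    (n : Fin I → ℝ) (hn : ∀ i, 0 ≤ n i) (hne : n ≠ 0) :
    ∃ L : Fin I → ℝ, IsAlloc A C α κ n L ∧
      (∀ i, 0 < n i → 0 < L i ∧ L i ≤ ⨆ j, C j) ∧
      ∀ L' : Fin I → ℝ, IsAlloc A C α κ n L' → L' = L :=
  stmt0_general A hA01 hAcol C hC α hα κ hκ n hn
end
end

section
/- The set of invariant states M_α equals {n ∈ ℝ₊^I : Λ_i(n) = ρ_i for all i ∈ I₊(n)}. -/
open Real Set

noncomputable section

/-!
A constant path has zero derivative, so it is a fluid model solution exactly when the drift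
`ν i - μ i * Λ n i` vanishes on every busy route, i.e. `Λ n i = ρ i` there; the capacity
condition is then the load condition `∑ i, A j i * ρ i ≤ C j`.
-/

theorem absContNonneg_const (c : ℝ) : AbsContNonneg fun _ => c :=
  fun _ _ _ hε => ⟨1, one_pos, fun _ _ _ _ _ _ => by simpa using hε⟩

theorem eq_zero_of_hasDerivWithinAt_const_Ici {a t c d : ℝ} (ht : a ≤ t)
    (h : HasDerivWithinAt (fun _ => c) d (Ici a) t) : d = 0 :=
  (uniqueDiffOn_Ici a t ht).eq_deriv _ h (hasDerivWithinAt_const _ _ _)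

theorem isFluidSol_const_iff {I J : ℕ} {A : Fin J → Fin I → ℝ} {C : Fin J → ℝ}
    {ν μ : Fin I → ℝ} {Λ : (Fin I → ℝ) → Fin I → ℝ} {n₀ : Fin I → ℝ}
    (hn₀ : ∀ i, 0 ≤ n₀ i) :
    IsFluidSol A C ν μ Λ (fun _ => n₀) ↔
      (∀ i, 0 < n₀ i → μ i * Λ n₀ i = ν i) ∧
        ∀ j, ∑ i, A j i * (if 0 < n₀ i then Λ n₀ i else ν i / μ i) ≤ C j := by
  have hdiff : ∀ i, DifferentiableWithinAt ℝ (fun _ : ℝ => n₀ i) (Ici 0) 0 :=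
    fun i => differentiableWithinAt_const _
  constructor
  · rintro ⟨-, -, hsol⟩
    obtain ⟨hdrift, hcap⟩ := hsol 0 self_mem_Ici hdiff
    refine ⟨fun i hi => ?_, hcap⟩
    have := eq_zero_of_hasDerivWithinAt_const_Ici le_rfl ((hdrift i).1 hi)
    linarith
  · rintro ⟨hdrift, hcap⟩
    refine ⟨fun i => absContNonneg_const (n₀ i), fun _ _ => hn₀, fun _ _ _ =>
      ⟨fun i => ⟨fun hi => ?_, fun _ => hasDerivWithinAt_const _ _ _⟩, hcap⟩⟩
    rw [hdrift i hi, sub_self]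
    exact hasDerivWithinAt_const _ _ _

theorem stmt5_general {I J : ℕ}
    (A : Fin J → Fin I → ℝ)
    (C : Fin J → ℝ)
    (ν μ : Fin I → ℝ) (hμ : ∀ i, 0 < μ i)
    (hload : ∀ j, (∑ i, A j i * (ν i / μ i)) ≤ C j)
    (Λ : (Fin I → ℝ) → Fin I → ℝ) :
    {n₀ : Fin I → ℝ | (∀ i, 0 ≤ n₀ i) ∧ IsFluidSol A C ν μ Λ fun _ => n₀} =
      {n : Fin I → ℝ | (∀ i, 0 ≤ n i) ∧ ∀ i, 0 < n i → Λ n i = ν i / μ i} := by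
  ext n
  refine and_congr_right fun hn => ?_
  have hrate : (∀ i, 0 < n i → μ i * Λ n i = ν i) ↔ ∀ i, 0 < n i → Λ n i = ν i / μ i := by
    simp only [eq_div_iff (hμ _).ne', mul_comm]
  rw [isFluidSol_const_iff hn, hrate]
  refine and_iff_left_of_imp fun hbusy j => ?_
  have hserved : ∀ i, (if 0 < n i then Λ n i else ν i / μ i) = ν i / μ i := fun i => by
    split_ifs with hi
    exacts [hbusy i hi, rfl]
  simpa only [hserved] using hload j

theorem stmt5 {I J : ℕ} (hI : 0 < I) (hJ : 0 < J)
    (A : Fin J → Fin I → ℝ) (hA01 : ∀ j i, A j i = 0 ∨ A j i = 1)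
    (hAcol : ∀ i, ∃ j, A j i = 1) (hArank : LinearIndependent ℝ A)
    (C : Fin J → ℝ) (hC : ∀ j, 0 < C j)
    (α : ℝ) (hα : 0 < α) (κ : Fin I → ℝ) (hκ : ∀ i, 0 < κ i)
    (ν μ : Fin I → ℝ) (hν : ∀ i, 0 < ν i) (hμ : ∀ i, 0 < μ i)
    (hload : ∀ j, (∑ i, A j i * (ν i / μ i)) ≤ C j)
    (hJs : (Jstar A C ν μ).Nonempty)
    (Λ : (Fin I → ℝ) → Fin I → ℝ)
    (hΛ : ∀ n : Fin I → ℝ, (∀ i, 0 ≤ n i) → IsAlloc A C α κ n (Λ n)) :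
    {n₀ : Fin I → ℝ | (∀ i, 0 ≤ n₀ i) ∧ IsFluidSol A C ν μ Λ fun _ => n₀} =
      {n : Fin I → ℝ | (∀ i, 0 ≤ n i) ∧ ∀ i, 0 < n i → Λ n i = ν i / μ i} :=
  stmt5_general A C ν μ hμ hload Λ
end
end
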